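/- For every ρ with 0 < ρ < 1, the Legendre generating-function kernel K_ρ(x,y) = 1/(4π√(1 − 2(x·y)ρ + ρ²)) is positive definite on the sphere: for every finite collection of points x₁,…,xₙ ∈ S² and all complex numbers c₁,…,cₙ, the sum ∑_{i=1}^{n} ∑_{j=1}^{n} c_i · conj(c_j) · K_ρ(x_i, x_j) is a nonnegative real number. -/

import Mathlib

open MeasureTheory Metric Finset
open scoped ComplexOrder

/-- The dot product of two points of the unit sphere `S² ⊂ ℝ³`. -/
noncomputable def sphereDot (x y : sphere (0 : EuclideanSpace ℝ (Fin 3)) 1) : ℝ :=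
  inner ℝ (x : EuclideanSpace ℝ (Fin 3)) (y : EuclideanSpace ℝ (Fin 3))

/-- The Legendre generating-function kernel with parameter `ρ`:
`K_ρ(x,y) = 1/(4π√(1 - 2(x·y)ρ + ρ²))`. -/
noncomputable def genKernel (ρ : ℝ) (x y : sphere (0 : EuclideanSpace ℝ (Fin 3)) 1) : ℝ :=
  1 / (4 * Real.pi * Real.sqrt (1 - 2 * sphereDot x y * ρ + ρ ^ 2))

/-!
Since `1 - 2tρ + ρ² = (1 + ρ²)(1 - st)` with `s = 2ρ / (1 + ρ²) < 1`, the binomial series of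
`(1 - z)^(-1/2)` expands `K_ρ(x, y)` as a power series in `t = x·y` with nonnegative coefficients,
convergent for `|t| ≤ 1`. The matrix `(xᵢ·xⱼ)` is a Gram matrix, its entrywise powers are positive
semidefinite by the Schur product theorem, and positive semidefinite matrices are closed under
nonnegative combinations and limits. Hence `(K_ρ(xᵢ, xⱼ))` is positive semidefinite, and a real
positive semidefinite matrix stays so over `ℂ`.
-/

open Real

namespace Matrix

variable {n 𝕜 : Type*} [Fintype n] [RCLike 𝕜]

theorem PosSemidef.sum_mul_star_mul_nonneg {M : Matrix n n 𝕜} (hM : M.PosSemidef) (c : n → 𝕜) :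
    0 ≤ ∑ i, ∑ j, c i * star (c j) * M i j := by
  convert hM.transpose.dotProduct_mulVec_nonneg c using 1
  simp only [dotProduct, mulVec, transpose_apply, Pi.star_apply, Finset.mul_sum]
  rw [Finset.sum_comm]
  exact Finset.sum_congr rfl fun i _ => Finset.sum_congr rfl fun j _ => by ring

theorem PosSemidef.of_hasSum {ι : Type*} {A : ι → Matrix n n 𝕜} {M : Matrix n n 𝕜}
    (hM : HasSum A M) (hA : ∀ i, (A i).PosSemidef) : M.PosSemidef := by
  refine .of_dotProduct_mulVec_nonneg ?_ fun x => ?_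
  · have hconj : HasSum A Mᴴ := by
      simpa only [fun i => (hA i).isHermitian.eq] using hM.matrix_conjTranspose
    exact hconj.unique hM
  · have hquad : HasSum (fun i => star x ⬝ᵥ (A i *ᵥ x)) (star x ⬝ᵥ (M *ᵥ x)) := by
      simp only [dotProduct, mulVec]
      exact hasSum_sum fun i _ => (hasSum_sum fun j _ =>
        ((Pi.hasSum.mp (Pi.hasSum.mp hM i) j).mul_right (x j))).mul_left (star x i)
    exact hquad.nonneg fun i => (hA i).dotProduct_mulVec_nonneg x

theorem PosSemidef.map_pow {A : Matrix n n 𝕜} (hA : A.PosSemidef) (k : ℕ) :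
    (A.map (· ^ k)).PosSemidef := by
  induction k with
  | zero =>
    simpa [vecMulVec, Matrix.map] using posSemidef_vecMulVec_self_star fun _ : n => (1 : 𝕜)
  | succ k ih =>
    have hsucc : A.map (· ^ (k + 1)) = A.map (· ^ k) ⊙ A := by ext i j; simp [pow_succ]
    exact hsucc ▸ ih.hadamard hA

theorem PosSemidef.map_of_hasSum_pow {A : Matrix n n 𝕜} (hA : A.PosSemidef) {a : ℕ → 𝕜}
    (ha : ∀ k, 0 ≤ a k) {f : 𝕜 → 𝕜} (hf : ∀ i j, HasSum (fun k => a k * A i j ^ k) (f (A i j))) :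
    (A.map f).PosSemidef :=
  .of_hasSum (A := fun k => a k • A.map (· ^ k))
    (Pi.hasSum.mpr fun i => Pi.hasSum.mpr fun j => hf i j) fun k => (hA.map_pow k).smul (ha k)

open scoped MatrixOrder in
theorem PosSemidef.map_algebraMap {A : Matrix n n ℝ} (hA : A.PosSemidef) :
    (A.map (algebraMap ℝ 𝕜)).PosSemidef := by
  classical
  obtain ⟨B, rfl⟩ := CStarAlgebra.nonneg_iff_eq_star_mul_self.mp hA.nonneg
  have hmap : (star B * B).map (algebraMap ℝ 𝕜)
      = (B.map (algebraMap ℝ 𝕜))ᴴ * B.map (algebraMap ℝ 𝕜) := by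
    rw [Matrix.map_mul, star_eq_conjTranspose, conjTranspose_map _ fun a => by simp]
  exact hmap ▸ posSemidef_conjTranspose_mul_self _

end Matrix

theorem Ring.multichoose_pos {r : ℝ} (hr : 0 < r) (k : ℕ) : 0 < Ring.multichoose r k := by
  have h := Ring.factorial_nsmul_multichoose_eq_ascPochhammer r k
  rw [Polynomial.ascPochhammer_smeval_eq_eval, nsmul_eq_mul] at h
  exact pos_of_mul_pos_right (h ▸ ascPochhammer_pos k r hr) (Nat.cast_nonneg _)

theorem Real.hasSum_multichoose_mul_pow_one_div_sqrt {z : ℝ} (hz : |z| < 1) :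
    HasSum (fun k => Ring.multichoose (1 / 2 : ℝ) k * z ^ k) (1 / √(1 - z)) := by
  have h := (one_div_one_sub_rpow_hasFPowerSeriesOnBall_zero (1 / 2)).hasSum
    (y := z) (by simpa [enorm_eq_nnnorm, ← NNReal.coe_lt_coe] using hz)
  simpa [FormalMultilinearSeries.ofScalars_apply_eq, Ring.multichoose_eq, sqrt_eq_rpow, mul_comm]
    using h

noncomputable def genKernelCoeff (ρ : ℝ) (k : ℕ) : ℝ :=
  Ring.multichoose (1 / 2 : ℝ) k * (2 * ρ / (1 + ρ ^ 2)) ^ k / (4 * π * √(1 + ρ ^ 2))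

theorem genKernelCoeff_nonneg {ρ : ℝ} (hρ : 0 ≤ ρ) (k : ℕ) : 0 ≤ genKernelCoeff ρ k := by
  have := Ring.multichoose_pos one_half_pos k
  unfold genKernelCoeff
  positivity

theorem hasSum_genKernelCoeff_mul_pow {ρ t : ℝ} (hρ₀ : 0 < ρ) (hρ₁ : ρ < 1) (ht : |t| ≤ 1) :
    HasSum (fun k => genKernelCoeff ρ k * t ^ k) (1 / (4 * π * √(1 - 2 * t * ρ + ρ ^ 2))) := by
  have hρ₂ : 0 < 1 + ρ ^ 2 := by positivity
  set s := 2 * ρ / (1 + ρ ^ 2) with hs_def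
  have hst : |s * t| < 1 := by
    rw [abs_mul, abs_of_pos (by positivity : 0 < s)]
    calc s * |t| ≤ s := mul_le_of_le_one_right (by positivity) ht
      _ < 1 := (div_lt_one hρ₂).mpr (by nlinarith)
  have hfactor : 1 - 2 * t * ρ + ρ ^ 2 = (1 + ρ ^ 2) * (1 - s * t) := by
    rw [hs_def]; field_simp; ring
  have hvalue : 1 / (4 * π * √(1 - 2 * t * ρ + ρ ^ 2))
      = 1 / (4 * π * √(1 + ρ ^ 2)) * (1 / √(1 - s * t)) := by
    rw [hfactor, sqrt_mul hρ₂.le]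
    field_simp
  have hcoeff : ∀ k, genKernelCoeff ρ k * t ^ k
      = 1 / (4 * π * √(1 + ρ ^ 2)) * (Ring.multichoose (1 / 2 : ℝ) k * (s * t) ^ k) := by
    intro k
    rw [genKernelCoeff, ← hs_def]
    ring
  simpa only [hvalue, hcoeff] using
    (hasSum_multichoose_mul_pow_one_div_sqrt hst).mul_left (1 / (4 * π * √(1 + ρ ^ 2)))

theorem abs_sphereDot_le_one (x y : sphere (0 : EuclideanSpace ℝ (Fin 3)) 1) :
    |sphereDot x y| ≤ 1 := by
  simpa [sphereDot] using abs_real_inner_le_norm (x : EuclideanSpace ℝ (Fin 3)) y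

/-- For every `0 < ρ < 1` the Legendre generating-function kernel is positive definite on
the sphere: for points `x₁, …, xₙ ∈ S²` and complex numbers `c₁, …, cₙ`, the sum
`∑ᵢ ∑ⱼ cᵢ conj(cⱼ) K_ρ(xᵢ, xⱼ)` is a nonnegative real number. -/
theorem gen_kernel_positive_definite (ρ : ℝ) (hρ₀ : 0 < ρ) (hρ₁ : ρ < 1) (n : ℕ)
    (x : Fin n → sphere (0 : EuclideanSpace ℝ (Fin 3)) 1) (c : Fin n → ℂ) :
    0 ≤ ∑ i, ∑ j, c i * (starRingEnd ℂ) (c j) *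
      ((genKernel ρ (x i) (x j) : ℝ) : ℂ) := by
  let G := Matrix.gram ℝ fun i => (x i : EuclideanSpace ℝ (Fin 3))
  have hK : (G.map fun t => 1 / (4 * π * √(1 - 2 * t * ρ + ρ ^ 2))).PosSemidef :=
    (Matrix.posSemidef_gram ℝ _).map_of_hasSum_pow (genKernelCoeff_nonneg hρ₀.le) fun i j =>
      hasSum_genKernelCoeff_mul_pow hρ₀ hρ₁ (abs_sphereDot_le_one (x i) (x j))
  exact (hK.map_algebraMap (𝕜 := ℂ)).sum_mul_star_mul_nonneg c
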